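/- There exists a constant C > 0, independent of h, the center of K, u and w, such that for every h > 0, every square K of half side h, every function u of class C⁴ on a neighborhood of K, and every w in the shape space P(K) = P₂(K) + span{x₁³, x₂³}, one has |∫_K ∇(Δu) · ∇(w − I_K w) dx₁dx₂| ≤ C h² |u|_{H⁴(K)} |w|_{H²(K)}. -/

import Mathlib

open MeasureTheory

/-- Partial derivative in the first variable of a curried function on `ℝ²`. -/
noncomputable def pdx (f : ℝ → ℝ → ℝ) : ℝ → ℝ → ℝ := fun x y => deriv (fun t => f t y) x

/-- Partial derivative in the second variable of a curried function on `ℝ²`. -/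
noncomputable def pdy (f : ℝ → ℝ → ℝ) : ℝ → ℝ → ℝ := fun x y => deriv (fun t => f x t) y

/-- Membership in the shape space `P(K) = P₂(K) + span{x₁³, x₂³}` of the two-dimensional
rectangular Morley element. -/
def MorleyShape2 (w : ℝ → ℝ → ℝ) : Prop :=
  ∃ c0 c1 c2 c3 c4 c5 c6 c7 : ℝ, ∀ x y : ℝ,
    w x y = c0 + c1 * x + c2 * y + c3 * x ^ 2 + c4 * (x * y) + c5 * y ^ 2
      + c6 * x ^ 3 + c7 * y ^ 3

/-- The bilinear (Q₁) interpolation operator on the square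
`K = [x1c-h, x1c+h] × [x2c-h, x2c+h]`: the unique element of `span{1, x₁, x₂, x₁x₂}`
agreeing with `w` at the four vertices of `K`. -/
noncomputable def IK (w : ℝ → ℝ → ℝ) (x1c x2c h : ℝ) : ℝ → ℝ → ℝ := fun x y =>
  (w (x1c + h) (x2c + h) * ((1 + (x - x1c) / h) * (1 + (y - x2c) / h))
    + w (x1c + h) (x2c - h) * ((1 + (x - x1c) / h) * (1 - (y - x2c) / h))
    + w (x1c - h) (x2c + h) * ((1 - (x - x1c) / h) * (1 + (y - x2c) / h))
    + w (x1c - h) (x2c - h) * ((1 - (x - x1c) / h) * (1 - (y - x2c) / h))) / 4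

/-- The `H²` seminorm of `v` on the rectangle `[a,b] × [c,d]`, each ordering of mixed
partial derivatives counted. -/
noncomputable def semiH2R (v : ℝ → ℝ → ℝ) (a b c d : ℝ) : ℝ :=
  Real.sqrt (∫ x in a..b, ∫ y in c..d,
    (pdx (pdx v) x y) ^ 2 + (pdx (pdy v) x y) ^ 2 + (pdy (pdx v) x y) ^ 2
      + (pdy (pdy v) x y) ^ 2)

/-- The `H⁴` seminorm of `u` on the rectangle `[a,b] × [c,d]`, each ordering of mixed
partial derivatives counted (hence the binomial coefficients). -/
noncomputable def semiH4R (u : ℝ → ℝ → ℝ) (a b c d : ℝ) : ℝ :=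
  Real.sqrt (∫ x in a..b, ∫ y in c..d,
    (pdx (pdx (pdx (pdx u))) x y) ^ 2 + 4 * (pdx (pdx (pdx (pdy u))) x y) ^ 2
      + 6 * (pdx (pdx (pdy (pdy u))) x y) ^ 2 + 4 * (pdx (pdy (pdy (pdy u))) x y) ^ 2
      + (pdy (pdy (pdy (pdy u))) x y) ^ 2)

/-- `u` is of class `C⁴` on a neighborhood of the rectangle `[a,b] × [c,d]`. -/
def C4Near (u : ℝ → ℝ → ℝ) (a b c d : ℝ) : Prop :=
  ∃ U : Set (ℝ × ℝ), IsOpen U ∧ Set.Icc a b ×ˢ Set.Icc c d ⊆ U ∧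
    ContDiffOn ℝ 4 (fun p : ℝ × ℝ => u p.1 p.2) U

/-!
For `w` in the Morley shape space the interpolation error splits as
`w - I_K w = ψ₁(x₁) + ψ₂(x₂)`, where `ψᵢ(t) = ((t - cᵢ)² - h²)(Aᵢ + dᵢ (t - cᵢ))` is a cubic
vanishing at both ends of the `i`-th side of `K`. The integrand is therefore
`∂₁Δu · ψ₁'(x₁) + ∂₂Δu · ψ₂'(x₂)`, and integrating by parts along each line moves the derivative
back onto `Δu`: `|∫ ∂₁Δu · ψ₁'| ≤ max |ψ₁| · ∫_K |∂₁²Δu|`. Here `max |ψ₁| ≤ h² (|A₁| + h |d₁|)` is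
`O(h |w|_{H²})`, and since `∂₁²Δu = ∂₁⁴u + ∂₁²∂₂²u` and (by Schwarz) `∂₂²Δu = ∂₁²∂₂²u + ∂₂⁴u`,
Cauchy–Schwarz gives `∫_K |∂ᵢ²Δu| ≤ 2h √2 |u|_{H⁴}`.
-/

open Set Function

section PartialDerivatives

variable {f g : ℝ → ℝ → ℝ} {U : Set (ℝ × ℝ)} {x y : ℝ}

theorem hasDerivAt_pdx (hf : DifferentiableAt ℝ (uncurry f) (x, y)) :
    HasDerivAt (fun t => f t y) (pdx f x y) x :=
  (hf.hasFDerivAt.comp_hasDerivAt x ((hasDerivAt_id x).prodMk (hasDerivAt_const x y)) :)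
    |>.differentiableAt.hasDerivAt

theorem hasDerivAt_pdy (hf : DifferentiableAt ℝ (uncurry f) (x, y)) :
    HasDerivAt (fun t => f x t) (pdy f x y) y :=
  (hf.hasFDerivAt.comp_hasDerivAt y ((hasDerivAt_const y x).prodMk (hasDerivAt_id y)) :)
    |>.differentiableAt.hasDerivAt

theorem pdx_eq_fderiv (hf : DifferentiableAt ℝ (uncurry f) (x, y)) :
    pdx f x y = fderiv ℝ (uncurry f) (x, y) (1, 0) :=
  (hf.hasFDerivAt.comp_hasDerivAt x ((hasDerivAt_id x).prodMk (hasDerivAt_const x y)) :).deriv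

theorem pdy_eq_fderiv (hf : DifferentiableAt ℝ (uncurry f) (x, y)) :
    pdy f x y = fderiv ℝ (uncurry f) (x, y) (0, 1) :=
  (hf.hasFDerivAt.comp_hasDerivAt y ((hasDerivAt_const y x).prodMk (hasDerivAt_id y)) :).deriv

theorem pdx_add_eqOn (hU : IsOpen U) (hf : DifferentiableOn ℝ (uncurry f) U)
    (hg : DifferentiableOn ℝ (uncurry g) U) :
    EqOn (uncurry (pdx fun a b => f a b + g a b)) (uncurry fun a b => pdx f a b + pdx g a b) U :=
  fun _ hp => ((hasDerivAt_pdx (hf.differentiableAt (hU.mem_nhds hp))).add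
    (hasDerivAt_pdx (hg.differentiableAt (hU.mem_nhds hp)))).deriv

theorem pdy_add_eqOn (hU : IsOpen U) (hf : DifferentiableOn ℝ (uncurry f) U)
    (hg : DifferentiableOn ℝ (uncurry g) U) :
    EqOn (uncurry (pdy fun a b => f a b + g a b)) (uncurry fun a b => pdy f a b + pdy g a b) U :=
  fun _ hp => ((hasDerivAt_pdy (hf.differentiableAt (hU.mem_nhds hp))).add
    (hasDerivAt_pdy (hg.differentiableAt (hU.mem_nhds hp)))).deriv

theorem ContDiffOn.uncurry_pdx {m n : WithTop ℕ∞} (hU : IsOpen U)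
    (hf : ContDiffOn ℝ n (uncurry f) U) (hmn : m + 1 ≤ n) :
    ContDiffOn ℝ m (uncurry (pdx f)) U :=
  ((hf.fderiv_of_isOpen hU hmn).clm_apply contDiffOn_const).congr fun _ hp =>
    pdx_eq_fderiv ((hf.differentiableOn ((zero_lt_one.trans_le le_add_self).trans_le hmn).ne')
      |>.differentiableAt (hU.mem_nhds hp))

theorem ContDiffOn.uncurry_pdy {m n : WithTop ℕ∞} (hU : IsOpen U)
    (hf : ContDiffOn ℝ n (uncurry f) U) (hmn : m + 1 ≤ n) :
    ContDiffOn ℝ m (uncurry (pdy f)) U :=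
  ((hf.fderiv_of_isOpen hU hmn).clm_apply contDiffOn_const).congr fun _ hp =>
    pdy_eq_fderiv ((hf.differentiableOn ((zero_lt_one.trans_le le_add_self).trans_le hmn).ne')
      |>.differentiableAt (hU.mem_nhds hp))

theorem Set.EqOn.uncurry_pdx (hU : IsOpen U) (hfg : EqOn (uncurry f) (uncurry g) U) :
    EqOn (uncurry (pdx f)) (uncurry (pdx g)) U := by
  rintro ⟨x, y⟩ hp
  have hslice : IsOpen {t | (t, y) ∈ U} := hU.preimage (by fun_prop)
  exact Filter.EventuallyEq.deriv_eq <|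
    Filter.eventually_of_mem (hslice.mem_nhds hp) fun t ht => hfg ht

theorem Set.EqOn.uncurry_pdy (hU : IsOpen U) (hfg : EqOn (uncurry f) (uncurry g) U) :
    EqOn (uncurry (pdy f)) (uncurry (pdy g)) U := by
  rintro ⟨x, y⟩ hp
  have hslice : IsOpen {t | (x, t) ∈ U} := hU.preimage (by fun_prop)
  exact Filter.EventuallyEq.deriv_eq <|
    Filter.eventually_of_mem (hslice.mem_nhds hp) fun t ht => hfg ht

theorem fderiv_fderiv_apply_comm {F : ℝ × ℝ → ℝ} {p : ℝ × ℝ} (hF : ContDiffAt ℝ 2 F p)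
    (v w : ℝ × ℝ) :
    fderiv ℝ (fun q => fderiv ℝ F q v) p w = fderiv ℝ (fun q => fderiv ℝ F q w) p v := by
  have hd : DifferentiableAt ℝ (fderiv ℝ F) p :=
    (hF.fderiv_right (m := 1) le_rfl).differentiableAt one_ne_zero
  have hlin : ∀ v w : ℝ × ℝ,
      fderiv ℝ (fun q => fderiv ℝ F q v) p w = fderiv ℝ (fderiv ℝ F) p w v :=
    fun v w => by rw [(hd.hasFDerivAt.clm_apply (hasFDerivAt_const v p)).fderiv]; simp
  rw [hlin, hlin]
  exact hF.isSymmSndFDerivAt (by simp) w v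

theorem pdx_pdy_eqOn (hU : IsOpen U) (hf : ContDiffOn ℝ 2 (uncurry f) U) :
    EqOn (uncurry (pdx (pdy f))) (uncurry (pdy (pdx f))) U := by
  rintro ⟨x, y⟩ hp
  have hF : DifferentiableOn ℝ (uncurry f) U := hf.differentiableOn two_ne_zero
  have hx : EqOn (uncurry (pdx f)) (fun q => fderiv ℝ (uncurry f) q (1, 0)) U :=
    fun q hq => pdx_eq_fderiv (hF.differentiableAt (hU.mem_nhds hq))
  have hy : EqOn (uncurry (pdy f)) (fun q => fderiv ℝ (uncurry f) q (0, 1)) U :=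
    fun q hq => pdy_eq_fderiv (hF.differentiableAt (hU.mem_nhds hq))
  have hdx : DifferentiableAt ℝ (uncurry (pdx f)) (x, y) :=
    ((hf.uncurry_pdx hU (m := 1) (by norm_num)).differentiableOn one_ne_zero).differentiableAt
      (hU.mem_nhds hp)
  have hdy : DifferentiableAt ℝ (uncurry (pdy f)) (x, y) :=
    ((hf.uncurry_pdy hU (m := 1) (by norm_num)).differentiableOn one_ne_zero).differentiableAt
      (hU.mem_nhds hp)
  change pdx (pdy f) x y = pdy (pdx f) x y
  rw [pdx_eq_fderiv hdy, pdy_eq_fderiv hdx, (hy.eventuallyEq_of_mem (hU.mem_nhds hp)).fderiv_eq,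
    (hx.eventuallyEq_of_mem (hU.mem_nhds hp)).fderiv_eq]
  exact fderiv_fderiv_apply_comm (hf.contDiffAt (hU.mem_nhds hp)) _ _

theorem pdy_pdy_pdx_pdx_eqOn (hU : IsOpen U) (hf : ContDiffOn ℝ 4 (uncurry f) U) :
    EqOn (uncurry (pdy (pdy (pdx (pdx f))))) (uncurry (pdx (pdx (pdy (pdy f))))) U :=
  -- `yyxx → yxyx → xyyx → xyxy → xxyy`, one application of Schwarz's theorem per step
  have hx : ContDiffOn ℝ 3 (uncurry (pdx f)) U := hf.uncurry_pdx hU (by norm_num)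
  have hy : ContDiffOn ℝ 3 (uncurry (pdy f)) U := hf.uncurry_pdy hU (by norm_num)
  ((pdx_pdy_eqOn hU (hx.of_le (by norm_num))).symm.uncurry_pdy hU).trans <|
  (pdx_pdy_eqOn hU (hx.uncurry_pdy hU (by norm_num))).symm.trans <|
  (((pdx_pdy_eqOn hU (hf.of_le (by norm_num))).symm.uncurry_pdy hU).uncurry_pdx hU).trans <|
  (pdx_pdy_eqOn hU (hy.of_le (by norm_num))).symm.uncurry_pdx hU

end PartialDerivatives

noncomputable def laplacian (u : ℝ → ℝ → ℝ) : ℝ → ℝ → ℝ :=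
  fun a b => pdx (pdx u) a b + pdy (pdy u) a b

noncomputable def h4Density (u : ℝ → ℝ → ℝ) (x y : ℝ) : ℝ :=
  (pdx (pdx (pdx (pdx u))) x y) ^ 2 + 4 * (pdx (pdx (pdx (pdy u))) x y) ^ 2
    + 6 * (pdx (pdx (pdy (pdy u))) x y) ^ 2 + 4 * (pdx (pdy (pdy (pdy u))) x y) ^ 2
    + (pdy (pdy (pdy (pdy u))) x y) ^ 2

section Laplacian

variable {u : ℝ → ℝ → ℝ} {U : Set (ℝ × ℝ)}

theorem ContDiffOn.uncurry_laplacian (hU : IsOpen U) (hu : ContDiffOn ℝ 4 (uncurry u) U) :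
    ContDiffOn ℝ 2 (uncurry (laplacian u)) U :=
  ((hu.uncurry_pdx hU (m := 3) (by norm_num)).uncurry_pdx hU (by norm_num)).add
    ((hu.uncurry_pdy hU (m := 3) (by norm_num)).uncurry_pdy hU (by norm_num))

theorem pdx_pdx_laplacian_eqOn (hU : IsOpen U) (hu : ContDiffOn ℝ 4 (uncurry u) U) :
    EqOn (uncurry (pdx (pdx (laplacian u))))
      (uncurry fun a b => pdx (pdx (pdx (pdx u))) a b + pdx (pdx (pdy (pdy u))) a b) U := by
  have hxx : ContDiffOn ℝ 2 (uncurry (pdx (pdx u))) U :=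
    (hu.uncurry_pdx hU (m := 3) (by norm_num)).uncurry_pdx hU (by norm_num)
  have hyy : ContDiffOn ℝ 2 (uncurry (pdy (pdy u))) U :=
    (hu.uncurry_pdy hU (m := 3) (by norm_num)).uncurry_pdy hU (by norm_num)
  refine ((pdx_add_eqOn hU (hxx.differentiableOn two_ne_zero)
    (hyy.differentiableOn two_ne_zero)).uncurry_pdx hU).trans (pdx_add_eqOn hU ?_ ?_)
  · exact (hxx.uncurry_pdx hU (m := 1) (by norm_num)).differentiableOn one_ne_zero
  · exact (hyy.uncurry_pdx hU (m := 1) (by norm_num)).differentiableOn one_ne_zero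

theorem pdy_pdy_laplacian_eqOn (hU : IsOpen U) (hu : ContDiffOn ℝ 4 (uncurry u) U) :
    EqOn (uncurry (pdy (pdy (laplacian u))))
      (uncurry fun a b => pdx (pdx (pdy (pdy u))) a b + pdy (pdy (pdy (pdy u))) a b) U := by
  have hxx : ContDiffOn ℝ 2 (uncurry (pdx (pdx u))) U :=
    (hu.uncurry_pdx hU (m := 3) (by norm_num)).uncurry_pdx hU (by norm_num)
  have hyy : ContDiffOn ℝ 2 (uncurry (pdy (pdy u))) U :=
    (hu.uncurry_pdy hU (m := 3) (by norm_num)).uncurry_pdy hU (by norm_num)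
  refine ((pdy_add_eqOn hU (hxx.differentiableOn two_ne_zero)
    (hyy.differentiableOn two_ne_zero)).uncurry_pdy hU).trans
    ((pdy_add_eqOn hU ?_ ?_).trans fun p hp => ?_)
  · exact (hxx.uncurry_pdy hU (m := 1) (by norm_num)).differentiableOn one_ne_zero
  · exact (hyy.uncurry_pdy hU (m := 1) (by norm_num)).differentiableOn one_ne_zero
  · exact congrArg (· + _) (pdy_pdy_pdx_pdx_eqOn hU hu hp)

theorem sq_pdx_pdx_laplacian_le (hU : IsOpen U) (hu : ContDiffOn ℝ 4 (uncurry u) U) {p : ℝ × ℝ}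
    (hp : p ∈ U) : uncurry (pdx (pdx (laplacian u))) p ^ 2 ≤ 2 * uncurry (h4Density u) p := by
  rw [pdx_pdx_laplacian_eqOn hU hu hp]
  simp only [uncurry, h4Density]
  nlinarith [sq_nonneg (pdx (pdx (pdx (pdx u))) p.1 p.2 - pdx (pdx (pdy (pdy u))) p.1 p.2),
    sq_nonneg (pdx (pdx (pdx (pdy u))) p.1 p.2), sq_nonneg (pdx (pdy (pdy (pdy u))) p.1 p.2),
    sq_nonneg (pdy (pdy (pdy (pdy u))) p.1 p.2), sq_nonneg (pdx (pdx (pdy (pdy u))) p.1 p.2)]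

theorem sq_pdy_pdy_laplacian_le (hU : IsOpen U) (hu : ContDiffOn ℝ 4 (uncurry u) U) {p : ℝ × ℝ}
    (hp : p ∈ U) : uncurry (pdy (pdy (laplacian u))) p ^ 2 ≤ 2 * uncurry (h4Density u) p := by
  rw [pdy_pdy_laplacian_eqOn hU hu hp]
  simp only [uncurry, h4Density]
  nlinarith [sq_nonneg (pdx (pdx (pdy (pdy u))) p.1 p.2 - pdy (pdy (pdy (pdy u))) p.1 p.2),
    sq_nonneg (pdx (pdx (pdx (pdy u))) p.1 p.2), sq_nonneg (pdx (pdy (pdy (pdy u))) p.1 p.2),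
    sq_nonneg (pdx (pdx (pdx (pdx u))) p.1 p.2), sq_nonneg (pdx (pdx (pdy (pdy u))) p.1 p.2)]

theorem continuousOn_h4Density (hU : IsOpen U) (hu : ContDiffOn ℝ 4 (uncurry u) U) :
    ContinuousOn (uncurry (h4Density u)) U := by
  have hx : ContDiffOn ℝ 3 (uncurry (pdx u)) U := hu.uncurry_pdx hU (by norm_num)
  have hy : ContDiffOn ℝ 3 (uncurry (pdy u)) U := hu.uncurry_pdy hU (by norm_num)
  have hxx : ContDiffOn ℝ 2 (uncurry (pdx (pdx u))) U := hx.uncurry_pdx hU (by norm_num)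
  have hxy : ContDiffOn ℝ 2 (uncurry (pdx (pdy u))) U := hy.uncurry_pdx hU (by norm_num)
  have hyy : ContDiffOn ℝ 2 (uncurry (pdy (pdy u))) U := hy.uncurry_pdy hU (by norm_num)
  have c1 : ContDiffOn ℝ 0 (uncurry (pdx (pdx (pdx (pdx u))))) U :=
    (hxx.uncurry_pdx hU (m := 1) (by norm_num)).uncurry_pdx hU (by norm_num)
  have c2 : ContDiffOn ℝ 0 (uncurry (pdx (pdx (pdx (pdy u))))) U :=
    (hxy.uncurry_pdx hU (m := 1) (by norm_num)).uncurry_pdx hU (by norm_num)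
  have c3 : ContDiffOn ℝ 0 (uncurry (pdx (pdx (pdy (pdy u))))) U :=
    (hyy.uncurry_pdx hU (m := 1) (by norm_num)).uncurry_pdx hU (by norm_num)
  have c4 : ContDiffOn ℝ 0 (uncurry (pdx (pdy (pdy (pdy u))))) U :=
    (hyy.uncurry_pdy hU (m := 1) (by norm_num)).uncurry_pdx hU (by norm_num)
  have c5 : ContDiffOn ℝ 0 (uncurry (pdy (pdy (pdy (pdy u))))) U :=
    (hyy.uncurry_pdy hU (m := 1) (by norm_num)).uncurry_pdy hU (by norm_num)
  exact ((((c1.continuousOn.pow 2).add ((c2.continuousOn.pow 2).const_smul (4 : ℝ))).add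
    ((c3.continuousOn.pow 2).const_smul (6 : ℝ))).add
    ((c4.continuousOn.pow 2).const_smul (4 : ℝ))).add (c5.continuousOn.pow 2)

end Laplacian

theorem integral_abs_le_sqrt_mul_sqrt {α : Type*} [MeasurableSpace α] {μ : Measure α}
    [IsFiniteMeasure μ] {f : α → ℝ} (hf : Integrable f μ) (hf2 : Integrable (fun x => f x ^ 2) μ) :
    ∫ x, |f x| ∂μ ≤ √(μ.real univ) * √(∫ x, f x ^ 2 ∂μ) := by
  set I := ∫ x, |f x| ∂μ
  -- `m ↦ ∫ (|f| - m) ^ 2` is a nonnegative quadratic, so its discriminant is nonpositive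
  have hquad : ∀ m : ℝ, 0 ≤ μ.real univ * (m * m) + (-2 * I) * m + ∫ x, f x ^ 2 ∂μ := by
    intro m
    have hexp : ∀ x, (|f x| - m) ^ 2 = f x ^ 2 - 2 * m * |f x| + m ^ 2 := fun x => by
      rw [sub_sq, sq_abs]; ring
    have hint : ∫ x, (|f x| - m) ^ 2 ∂μ = ∫ x, f x ^ 2 ∂μ - 2 * m * I + μ.real univ * m ^ 2 := by
      have h1 : Integrable (fun x => f x ^ 2 - 2 * m * |f x|) μ := hf2.sub (hf.abs.const_mul _)
      simp_rw [hexp]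
      rw [integral_add h1 (integrable_const _),
        integral_sub hf2 (hf.abs.const_mul _), integral_const_mul, integral_const, smul_eq_mul]
    have : 0 ≤ ∫ x, (|f x| - m) ^ 2 ∂μ := integral_nonneg fun x => sq_nonneg _
    nlinarith
  have hdisc := discrim_le_zero hquad
  unfold discrim at hdisc
  rw [← Real.sqrt_mul measureReal_nonneg]
  apply Real.le_sqrt_of_sq_le
  nlinarith

theorem integral_sq_affine (a b c h : ℝ) :
    ∫ x in (c - h)..(c + h), (a + b * x) ^ 2 = 2 * h * (a + b * c) ^ 2 + 2 / 3 * b ^ 2 * h ^ 3 := by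
  rw [intervalIntegral.integral_deriv_eq_sub'
    (fun x => a ^ 2 * x + a * b * x ^ 2 + b ^ 2 / 3 * x ^ 3)]
  · ring
  · ext x
    simp (disch := fun_prop) [deriv_fun_add, deriv_fun_mul]
    ring
  · intros; fun_prop
  · fun_prop

section Rectangle

variable {a b c d : ℝ}

theorem integral_integral_eq_setIntegral_prod {f : ℝ × ℝ → ℝ} (hab : a ≤ b) (hcd : c ≤ d)
    (hf : IntegrableOn f (Ioc a b ×ˢ Ioc c d)) :
    ∫ x in a..b, ∫ y in c..d, f (x, y) = ∫ p in Ioc a b ×ˢ Ioc c d, f p := by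
  rw [Measure.volume_eq_prod] at hf ⊢
  simp only [intervalIntegral.integral_of_le hab, intervalIntegral.integral_of_le hcd]
  exact (setIntegral_prod f hf).symm

theorem ContinuousOn.integrableOn_Ioc_prod {f : ℝ × ℝ → ℝ}
    (hf : ContinuousOn f (Icc a b ×ˢ Icc c d)) :
    IntegrableOn f (Ioc a b ×ˢ Ioc c d) :=
  (hf.integrableOn_compact (isCompact_Icc.prod isCompact_Icc)).mono_set
    (prod_mono Ioc_subset_Icc_self Ioc_subset_Icc_self)

theorem abs_integral_mul_deriv_le {G G' ψ : ℝ → ℝ} {M : ℝ} (hcd : c ≤ d)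
    (hG : ∀ t ∈ Icc c d, HasDerivAt G (G' t) t) (hG' : ContinuousOn G' (Icc c d))
    (hψ : ContDiff ℝ 1 ψ) (hψc : ψ c = 0) (hψd : ψ d = 0) (hM : ∀ t ∈ Icc c d, |ψ t| ≤ M) :
    |∫ t in c..d, G t * deriv ψ t| ≤ M * ∫ t in c..d, |G' t| := by
  rw [intervalIntegral.integral_mul_deriv_eq_deriv_mul (uIcc_of_le hcd ▸ hG)
    (fun t _ => (hψ.differentiable one_ne_zero t).hasDerivAt)
    ((uIcc_of_le hcd ▸ hG').intervalIntegrable)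
    ((hψ.continuous_deriv le_rfl).intervalIntegrable _ _),
    hψc, hψd, mul_zero, mul_zero, sub_self, zero_sub, abs_neg,
    ← intervalIntegral.integral_const_mul]
  refine (Real.norm_eq_abs _).symm.trans_le <| intervalIntegral.norm_integral_le_of_norm_le hcd
    (Filter.Eventually.of_forall fun t ht => ?_)
    (((uIcc_of_le hcd ▸ hG').abs.const_mul M).intervalIntegrable)
  rw [Real.norm_eq_abs, abs_mul, mul_comm]
  exact mul_le_mul_of_nonneg_right (hM t (Ioc_subset_Icc_self ht)) (abs_nonneg _)

theorem abs_setIntegral_mul_deriv_snd_le {G D : ℝ × ℝ → ℝ} {ψ : ℝ → ℝ} {M : ℝ} (hcd : c ≤ d)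
    (hGc : ContinuousOn G (Icc a b ×ˢ Icc c d)) (hDc : ContinuousOn D (Icc a b ×ˢ Icc c d))
    (hG : ∀ p ∈ Icc a b ×ˢ Icc c d, HasDerivAt (fun t => G (p.1, t)) (D p) p.2)
    (hψ : ContDiff ℝ 1 ψ) (hψc : ψ c = 0) (hψd : ψ d = 0) (hM : ∀ t ∈ Icc c d, |ψ t| ≤ M) :
    |∫ p in Ioc a b ×ˢ Ioc c d, G p * deriv ψ p.2| ≤ M * ∫ p in Ioc a b ×ˢ Ioc c d, |D p| := by
  have hGψ : IntegrableOn (fun p => G p * deriv ψ p.2) (Ioc a b ×ˢ Ioc c d) :=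
    (hGc.mul ((hψ.continuous_deriv le_rfl).comp continuous_snd).continuousOn).integrableOn_Ioc_prod
  have hD : IntegrableOn (fun p => |D p|) (Ioc a b ×ˢ Ioc c d) := hDc.abs.integrableOn_Ioc_prod
  rw [Measure.volume_eq_prod] at hGψ hD ⊢
  rw [setIntegral_prod _ hGψ, setIntegral_prod _ hD, ← integral_const_mul]
  rw [IntegrableOn, ← Measure.prod_restrict] at hD
  refine (Real.norm_eq_abs _).symm.trans_le <|
    norm_integral_le_of_norm_le (hD.integral_prod_left.const_mul M) ?_
  filter_upwards [ae_restrict_mem measurableSet_Ioc] with x hx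
  have hx' : x ∈ Icc a b := Ioc_subset_Icc_self hx
  rw [Real.norm_eq_abs, ← intervalIntegral.integral_of_le hcd,
    ← intervalIntegral.integral_of_le hcd]
  exact abs_integral_mul_deriv_le hcd (fun t ht => hG (x, t) ⟨hx', ht⟩)
    (hDc.comp (continuousOn_const.prodMk continuousOn_id) fun t ht => ⟨hx', ht⟩) hψ hψc hψd hM

theorem abs_setIntegral_mul_deriv_fst_le {G D : ℝ × ℝ → ℝ} {ψ : ℝ → ℝ} {M : ℝ} (hab : a ≤ b)
    (hGc : ContinuousOn G (Icc a b ×ˢ Icc c d)) (hDc : ContinuousOn D (Icc a b ×ˢ Icc c d))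
    (hG : ∀ p ∈ Icc a b ×ˢ Icc c d, HasDerivAt (fun t => G (t, p.2)) (D p) p.1)
    (hψ : ContDiff ℝ 1 ψ) (hψa : ψ a = 0) (hψb : ψ b = 0) (hM : ∀ t ∈ Icc a b, |ψ t| ≤ M) :
    |∫ p in Ioc a b ×ˢ Ioc c d, G p * deriv ψ p.1| ≤ M * ∫ p in Ioc a b ×ˢ Ioc c d, |D p| := by
  have hswap : MapsTo Prod.swap (Icc c d ×ˢ Icc a b) (Icc a b ×ˢ Icc c d) := fun _ hp => hp.symm
  have hvol : ∀ F : ℝ × ℝ → ℝ,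
      ∫ p in Ioc a b ×ˢ Ioc c d, F p = ∫ p in Ioc c d ×ˢ Ioc a b, F p.swap := fun F => by
    rw [Measure.volume_eq_prod]; exact (setIntegral_prod_swap _ _ F).symm
  rw [hvol, hvol fun p => |D p|]
  exact abs_setIntegral_mul_deriv_snd_le hab (hGc.comp continuous_swap.continuousOn hswap)
    (hDc.comp continuous_swap.continuousOn hswap) (fun p hp => hG p.swap (hswap hp)) hψ hψa hψb hM

theorem volume_real_Ioc_prod_Ioc (hab : a ≤ b) (hcd : c ≤ d) :
    volume.real (Ioc a b ×ˢ Ioc c d) = (b - a) * (d - c) := by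
  rw [Measure.volume_eq_prod, measureReal_prod_prod, Real.volume_real_Ioc_of_le hab,
    Real.volume_real_Ioc_of_le hcd]

theorem setIntegral_abs_le_mul_semiH4R {u : ℝ → ℝ → ℝ} {D : ℝ × ℝ → ℝ} (hab : a ≤ b)
    (hcd : c ≤ d) (hD : ContinuousOn D (Icc a b ×ˢ Icc c d))
    (hH : ContinuousOn (uncurry (h4Density u)) (Icc a b ×ˢ Icc c d))
    (hDH : ∀ p ∈ Icc a b ×ˢ Icc c d, D p ^ 2 ≤ 2 * uncurry (h4Density u) p) :
    ∫ p in Ioc a b ×ˢ Ioc c d, |D p| ≤ √((b - a) * (d - c)) * √2 * semiH4R u a b c d := by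
  set K := Ioc a b ×ˢ Ioc c d
  have : IsFiniteMeasure (volume.restrict K) := isFiniteMeasure_restrict.2 <| by
    rw [Measure.volume_eq_prod, Measure.prod_prod]
    exact ENNReal.mul_ne_top measure_Ioc_lt_top.ne measure_Ioc_lt_top.ne
  have hD2 : IntegrableOn (fun p => D p ^ 2) K := (hD.pow 2).integrableOn_Ioc_prod
  calc ∫ p in K, |D p| ≤ √(volume.real K) * √(∫ p in K, D p ^ 2) := by
        simpa only [measureReal_restrict_apply_univ] using
          integral_abs_le_sqrt_mul_sqrt hD.integrableOn_Ioc_prod hD2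
    _ ≤ √((b - a) * (d - c)) * √(2 * ∫ p in K, uncurry (h4Density u) p) := by
        rw [volume_real_Ioc_prod_Ioc hab hcd, ← integral_const_mul]
        refine mul_le_mul_of_nonneg_left (Real.sqrt_le_sqrt ?_) (Real.sqrt_nonneg _)
        exact setIntegral_mono_on hD2 (hH.integrableOn_Ioc_prod.const_mul 2)
          (measurableSet_Ioc.prod measurableSet_Ioc) fun p hp =>
            hDH p (prod_mono Ioc_subset_Icc_self Ioc_subset_Icc_self hp)
    _ = √((b - a) * (d - c)) * √2 * semiH4R u a b c d := by
        rw [Real.sqrt_mul zero_le_two, ← mul_assoc, semiH4R,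
          ← integral_integral_eq_setIntegral_prod hab hcd hH.integrableOn_Ioc_prod]
        rfl

theorem abs_setIntegral_pdx_laplacian_mul_le {u : ℝ → ℝ → ℝ} {U : Set (ℝ × ℝ)} {ψ : ℝ → ℝ}
    {M : ℝ} (hab : a ≤ b) (hcd : c ≤ d) (hU : IsOpen U) (hKU : Icc a b ×ˢ Icc c d ⊆ U)
    (hu : ContDiffOn ℝ 4 (uncurry u) U) (hψ : ContDiff ℝ 1 ψ) (hψa : ψ a = 0) (hψb : ψ b = 0)
    (hM : ∀ t ∈ Icc a b, |ψ t| ≤ M) :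
    |∫ p in Ioc a b ×ˢ Ioc c d, uncurry (pdx (laplacian u)) p * deriv ψ p.1|
      ≤ M * (√((b - a) * (d - c)) * √2 * semiH4R u a b c d) := by
  have hLx : ContDiffOn ℝ 1 (uncurry (pdx (laplacian u))) U :=
    (hu.uncurry_laplacian hU).uncurry_pdx hU (by norm_num)
  have hLxx : ContinuousOn (uncurry (pdx (pdx (laplacian u)))) U :=
    (hLx.uncurry_pdx hU (m := 0) (by norm_num)).continuousOn
  refine (abs_setIntegral_mul_deriv_fst_le hab (hLx.continuousOn.mono hKU) (hLxx.mono hKU)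
    (fun p hp => hasDerivAt_pdx ((hLx.differentiableOn one_ne_zero).differentiableAt
      (hU.mem_nhds (hKU hp)))) hψ hψa hψb hM).trans ?_
  exact mul_le_mul_of_nonneg_left (setIntegral_abs_le_mul_semiH4R hab hcd (hLxx.mono hKU)
    ((continuousOn_h4Density hU hu).mono hKU) fun p hp => sq_pdx_pdx_laplacian_le hU hu (hKU hp))
    ((abs_nonneg _).trans (hM a (left_mem_Icc.2 hab)))

theorem abs_setIntegral_pdy_laplacian_mul_le {u : ℝ → ℝ → ℝ} {U : Set (ℝ × ℝ)} {ψ : ℝ → ℝ}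
    {M : ℝ} (hab : a ≤ b) (hcd : c ≤ d) (hU : IsOpen U) (hKU : Icc a b ×ˢ Icc c d ⊆ U)
    (hu : ContDiffOn ℝ 4 (uncurry u) U) (hψ : ContDiff ℝ 1 ψ) (hψc : ψ c = 0) (hψd : ψ d = 0)
    (hM : ∀ t ∈ Icc c d, |ψ t| ≤ M) :
    |∫ p in Ioc a b ×ˢ Ioc c d, uncurry (pdy (laplacian u)) p * deriv ψ p.2|
      ≤ M * (√((b - a) * (d - c)) * √2 * semiH4R u a b c d) := by
  have hLy : ContDiffOn ℝ 1 (uncurry (pdy (laplacian u))) U :=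
    (hu.uncurry_laplacian hU).uncurry_pdy hU (by norm_num)
  have hLyy : ContinuousOn (uncurry (pdy (pdy (laplacian u)))) U :=
    (hLy.uncurry_pdy hU (m := 0) (by norm_num)).continuousOn
  refine (abs_setIntegral_mul_deriv_snd_le hcd (hLy.continuousOn.mono hKU) (hLyy.mono hKU)
    (fun p hp => hasDerivAt_pdy ((hLy.differentiableOn one_ne_zero).differentiableAt
      (hU.mem_nhds (hKU hp)))) hψ hψc hψd hM).trans ?_
  exact mul_le_mul_of_nonneg_left (setIntegral_abs_le_mul_semiH4R hab hcd (hLyy.mono hKU)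
    ((continuousOn_h4Density hU hu).mono hKU) fun p hp => sq_pdy_pdy_laplacian_le hU hu (hKU hp))
    ((abs_nonneg _).trans (hM c (left_mem_Icc.2 hcd)))

theorem abs_integral_grad_laplacian_mul_le {u : ℝ → ℝ → ℝ} {U : Set (ℝ × ℝ)}
    {M₁ M₂ : ℝ} {ψ₁ ψ₂ : ℝ → ℝ} (hab : a ≤ b) (hcd : c ≤ d) (hU : IsOpen U)
    (hKU : Icc a b ×ˢ Icc c d ⊆ U) (hu : ContDiffOn ℝ 4 (uncurry u) U)
    (hψ₁ : ContDiff ℝ 1 ψ₁) (hψ₁a : ψ₁ a = 0) (hψ₁b : ψ₁ b = 0) (hM₁ : ∀ t ∈ Icc a b, |ψ₁ t| ≤ M₁)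
    (hψ₂ : ContDiff ℝ 1 ψ₂) (hψ₂c : ψ₂ c = 0) (hψ₂d : ψ₂ d = 0) (hM₂ : ∀ t ∈ Icc c d, |ψ₂ t| ≤ M₂) :
    |∫ x in a..b, ∫ y in c..d,
        pdx (laplacian u) x y * deriv ψ₁ x + pdy (laplacian u) x y * deriv ψ₂ y|
      ≤ (M₁ + M₂) * √((b - a) * (d - c)) * √2 * semiH4R u a b c d := by
  have hL := hu.uncurry_laplacian hU
  have hF₁ : ContinuousOn (fun p => uncurry (pdx (laplacian u)) p * deriv ψ₁ p.1)
      (Icc a b ×ˢ Icc c d) :=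
    ((hL.uncurry_pdx hU (m := 1) (by norm_num)).continuousOn.mono hKU).mul
      ((hψ₁.continuous_deriv le_rfl).comp continuous_fst).continuousOn
  have hF₂ : ContinuousOn (fun p => uncurry (pdy (laplacian u)) p * deriv ψ₂ p.2)
      (Icc a b ×ˢ Icc c d) :=
    ((hL.uncurry_pdy hU (m := 1) (by norm_num)).continuousOn.mono hKU).mul
      ((hψ₂.continuous_deriv le_rfl).comp continuous_snd).continuousOn
  calc _ = |(∫ p in Ioc a b ×ˢ Ioc c d, uncurry (pdx (laplacian u)) p * deriv ψ₁ p.1)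
        + ∫ p in Ioc a b ×ˢ Ioc c d, uncurry (pdy (laplacian u)) p * deriv ψ₂ p.2| := by
        rw [← integral_add hF₁.integrableOn_Ioc_prod hF₂.integrableOn_Ioc_prod]
        exact congrArg abs
          (integral_integral_eq_setIntegral_prod hab hcd (hF₁.add hF₂).integrableOn_Ioc_prod)
    _ ≤ _ := abs_add_le _ _
    _ ≤ M₁ * (√((b - a) * (d - c)) * √2 * semiH4R u a b c d)
        + M₂ * (√((b - a) * (d - c)) * √2 * semiH4R u a b c d) :=
      add_le_add (abs_setIntegral_pdx_laplacian_mul_le hab hcd hU hKU hu hψ₁ hψ₁a hψ₁b hM₁)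
        (abs_setIntegral_pdy_laplacian_mul_le hab hcd hU hKU hu hψ₂ hψ₂c hψ₂d hM₂)
    _ = _ := by ring

end Rectangle

def cubicBubble (c h A d t : ℝ) : ℝ := ((t - c) ^ 2 - h ^ 2) * (A + d * (t - c))

section CubicBubble

variable {c h A d : ℝ}

theorem cubicBubble_sub_self : cubicBubble c h A d (c - h) = 0 := by simp [cubicBubble]

theorem cubicBubble_add_self : cubicBubble c h A d (c + h) = 0 := by simp [cubicBubble]

theorem contDiff_cubicBubble : ContDiff ℝ 1 (cubicBubble c h A d) := by
  unfold cubicBubble; fun_prop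

theorem abs_cubicBubble_le (hh : 0 ≤ h) {t : ℝ} (ht : t ∈ Icc (c - h) (c + h)) :
    |cubicBubble c h A d t| ≤ h ^ 2 * (|A| + h * |d|) := by
  have hs : |t - c| ≤ h := abs_sub_le_iff.mpr ⟨by linarith [ht.2], by linarith [ht.1]⟩
  rw [cubicBubble, abs_mul]
  gcongr
  · rw [abs_le]; constructor <;> nlinarith [abs_nonneg (t - c), sq_abs (t - c)]
  · calc |A + d * (t - c)| ≤ |A| + |d| * |t - c| := by rw [← abs_mul]; exact abs_add_le _ _
      _ ≤ |A| + h * |d| := by nlinarith [abs_nonneg d]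

end CubicBubble

section MorleyShape

variable {w : ℝ → ℝ → ℝ} {c0 c1 c2 c3 c4 c5 c6 c7 x1c x2c h : ℝ}

theorem sub_IK_eq_cubicBubble (hh : h ≠ 0)
    (hw : ∀ x y, w x y = c0 + c1 * x + c2 * y + c3 * x ^ 2 + c4 * (x * y) + c5 * y ^ 2
      + c6 * x ^ 3 + c7 * y ^ 3) (x y : ℝ) :
    w x y - IK w x1c x2c h x y
      = cubicBubble x1c h (c3 + 3 * x1c * c6) c6 x
        + cubicBubble x2c h (c5 + 3 * x2c * c7) c7 y := by
  simp only [IK, hw, cubicBubble]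
  field_simp
  ring

theorem pdx_sub_IK (hh : h ≠ 0)
    (hw : ∀ x y, w x y = c0 + c1 * x + c2 * y + c3 * x ^ 2 + c4 * (x * y) + c5 * y ^ 2
      + c6 * x ^ 3 + c7 * y ^ 3) (x y : ℝ) :
    pdx (fun a b => w a b - IK w x1c x2c h a b) x y
      = deriv (cubicBubble x1c h (c3 + 3 * x1c * c6) c6) x := by
  simp only [pdx, sub_IK_eq_cubicBubble hh hw, deriv_add_const]

theorem pdy_sub_IK (hh : h ≠ 0)
    (hw : ∀ x y, w x y = c0 + c1 * x + c2 * y + c3 * x ^ 2 + c4 * (x * y) + c5 * y ^ 2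
      + c6 * x ^ 3 + c7 * y ^ 3) (x y : ℝ) :
    pdy (fun a b => w a b - IK w x1c x2c h a b) x y
      = deriv (cubicBubble x2c h (c5 + 3 * x2c * c7) c7) y := by
  simp only [pdy, sub_IK_eq_cubicBubble hh hw, deriv_const_add]

theorem semiH2R_eq_sqrt
    (hw : ∀ x y, w x y = c0 + c1 * x + c2 * y + c3 * x ^ 2 + c4 * (x * y) + c5 * y ^ 2
      + c6 * x ^ 3 + c7 * y ^ 3) :
    semiH2R w (x1c - h) (x1c + h) (x2c - h) (x2c + h)
      = √(16 * ((c3 + 3 * x1c * c6) ^ 2 + (c5 + 3 * x2c * c7) ^ 2) * h ^ 2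
          + 48 * (c6 ^ 2 + c7 ^ 2) * h ^ 4 + 8 * c4 ^ 2 * h ^ 2) := by
  unfold semiH2R
  congr 1
  have hsq : ∀ x y : ℝ, (pdx (pdx w) x y) ^ 2 + (pdx (pdy w) x y) ^ 2 + (pdy (pdx w) x y) ^ 2
      + (pdy (pdy w) x y) ^ 2
        = (2 * c3 + 6 * c6 * x) ^ 2 + 2 * c4 ^ 2 + (2 * c5 + 6 * c7 * y) ^ 2 := by
    intro x y
    simp (disch := fun_prop) [pdx, pdy, hw, deriv_fun_add, deriv_fun_mul]
    ring
  simp only [hsq]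
  simp (disch := first | fun_prop | exact (by fun_prop : Continuous _).intervalIntegrable _ _)
    [intervalIntegral.integral_add, integral_sq_affine]
  ring

theorem cubicBubble_bounds_le_mul_semiH2R (hh : 0 ≤ h)
    (hw : ∀ x y, w x y = c0 + c1 * x + c2 * y + c3 * x ^ 2 + c4 * (x * y) + c5 * y ^ 2
      + c6 * x ^ 3 + c7 * y ^ 3) :
    h ^ 2 * (|c3 + 3 * x1c * c6| + h * |c6|) + h ^ 2 * (|c5 + 3 * x2c * c7| + h * |c7|)
      ≤ h * semiH2R w (x1c - h) (x1c + h) (x2c - h) (x2c + h) := by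
  rw [semiH2R_eq_sqrt hw, ← Real.sqrt_sq hh, ← Real.sqrt_mul (sq_nonneg h), Real.sqrt_sq hh]
  apply Real.le_sqrt_of_sq_le
  set A := c3 + 3 * x1c * c6
  set B := c5 + 3 * x2c * c7
  have hsum : (|A| + |B| + h * |c6| + h * |c7|) ^ 2
      ≤ 4 * (A ^ 2 + B ^ 2 + h ^ 2 * (c6 ^ 2 + c7 ^ 2)) := by
    simp only [← sq_abs A, ← sq_abs B, ← sq_abs c6, ← sq_abs c7]
    nlinarith [sq_nonneg (|A| - |B|), sq_nonneg (|A| - h * |c6|), sq_nonneg (|A| - h * |c7|),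
      sq_nonneg (|B| - h * |c6|), sq_nonneg (|B| - h * |c7|), sq_nonneg (h * |c6| - h * |c7|)]
  have h4 : 0 ≤ h ^ 4 := by positivity
  calc (h ^ 2 * (|A| + h * |c6|) + h ^ 2 * (|B| + h * |c7|)) ^ 2
      = h ^ 4 * (|A| + |B| + h * |c6| + h * |c7|) ^ 2 := by ring
    _ ≤ h ^ 4 * (4 * (A ^ 2 + B ^ 2 + h ^ 2 * (c6 ^ 2 + c7 ^ 2))) := by gcongr
    _ ≤ h ^ 2 * (16 * (A ^ 2 + B ^ 2) * h ^ 2 + 48 * (c6 ^ 2 + c7 ^ 2) * h ^ 4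
          + 8 * c4 ^ 2 * h ^ 2) := by
      nlinarith [mul_nonneg h4 (sq_nonneg A), mul_nonneg h4 (sq_nonneg B),
        mul_nonneg (mul_nonneg h4 (sq_nonneg h)) (add_nonneg (sq_nonneg c6) (sq_nonneg c7)),
        mul_nonneg h4 (sq_nonneg c4)]

end MorleyShape

/-- Superconvergence of the volume term of the consistency error on one element. -/
theorem stmt_4 :
    ∃ C > (0:ℝ), ∀ h : ℝ, 0 < h → ∀ x1c x2c : ℝ, ∀ u w : ℝ → ℝ → ℝ,
      C4Near u (x1c - h) (x1c + h) (x2c - h) (x2c + h) → MorleyShape2 w →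
      |∫ x in (x1c - h)..(x1c + h), ∫ y in (x2c - h)..(x2c + h),
          pdx (fun a b => pdx (pdx u) a b + pdy (pdy u) a b) x y
              * pdx (fun a b => w a b - IK w x1c x2c h a b) x y
            + pdy (fun a b => pdx (pdx u) a b + pdy (pdy u) a b) x y
              * pdy (fun a b => w a b - IK w x1c x2c h a b) x y|
        ≤ C * h ^ 2 * semiH4R u (x1c - h) (x1c + h) (x2c - h) (x2c + h) * semiH2R w (x1c - h) (x1c + h) (x2c - h) (x2c + h) := by
  refine ⟨3, by norm_num, fun h hh x1c x2c u w ⟨U, hU, hKU, hu⟩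
    ⟨c0, c1, c2, c3, c4, c5, c6, c7, hw⟩ => ?_⟩
  simp only [pdx_sub_IK hh.ne' hw, pdy_sub_IK hh.ne' hw]
  have hside : √((x1c + h - (x1c - h)) * (x2c + h - (x2c - h))) = 2 * h := by
    rw [show (x1c + h - (x1c - h)) * (x2c + h - (x2c - h)) = (2 * h) ^ 2 by ring,
      Real.sqrt_sq (by positivity)]
  have hsqrt2 : √2 ≤ 3 / 2 := Real.sqrt_le_iff.2 ⟨by norm_num, by norm_num⟩
  have hbubble := cubicBubble_bounds_le_mul_semiH2R (x1c := x1c) (x2c := x2c) hh.le hw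
  have hu4 : 0 ≤ semiH4R u (x1c - h) (x1c + h) (x2c - h) (x2c + h) := Real.sqrt_nonneg _
  refine (abs_integral_grad_laplacian_mul_le (by linarith) (by linarith) hU hKU hu
    contDiff_cubicBubble cubicBubble_sub_self cubicBubble_add_self
    (fun _ => abs_cubicBubble_le hh.le)
    contDiff_cubicBubble cubicBubble_sub_self cubicBubble_add_self
    (fun _ => abs_cubicBubble_le hh.le)).trans ?_
  rw [hside]
  calc _ ≤ (h * semiH2R w (x1c - h) (x1c + h) (x2c - h) (x2c + h)) * (2 * h) * (3 / 2)
        * semiH4R u (x1c - h) (x1c + h) (x2c - h) (x2c + h) := by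
          gcongr
          exact mul_nonneg (mul_nonneg hh.le (Real.sqrt_nonneg _)) (by positivity)
    _ = _ := by ring
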